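/- Let J be the invertible lower bidiagonal K×K matrix with diagonal −1 and subdiagonal entries 1 − α c_k, and let Γ = diag(γ₁,…,γ_K) with γ_k ≥ 0. Then the (i,j) entry of J⁻¹ Γ J⁻ᵀ, for i ≤ j, equals Σ_{k=1}^{i} γ_k · [∏_{m=k}^{i−1}(1 − α c_m)]² · [∏_{m=i}^{j−1}(1 − α c_m)], with the convention that empty products equal 1. -/

import Mathlib

open Matrix

theorem Matrix.mul_diagonal_mul_transpose_apply {n R : Type*} [Fintype n] [DecidableEq n]
    [CommSemiring R] (A B : Matrix n n R) (d : n → R) (i j : n) :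
    (A * diagonal d * Bᵀ) i j = ∑ k, A i k * d k * B j k := by
  simp only [mul_apply (M := A * diagonal d), mul_diagonal, transpose_apply]

theorem stmt13_general (K : ℕ) (α : ℝ) (c : ℕ → ℝ) (γ : Fin K → ℝ)
    (Jinv : Matrix (Fin K) (Fin K) ℝ)
    (hJinv : Jinv = Matrix.of fun i j : Fin K =>
      if (j : ℕ) ≤ (i : ℕ) then -(∏ ℓ ∈ Finset.Ico (j : ℕ) (i : ℕ), (1 - α * c ℓ)) else 0) :
    ∀ i j : Fin K, i ≤ j →
      (Jinv * Matrix.diagonal γ * Jinvᵀ) i j =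
        ∑ k ∈ Finset.Iic i, γ k *
          (∏ m ∈ Finset.Ico (k : ℕ) (i : ℕ), (1 - α * c m)) ^ 2 *
          (∏ m ∈ Finset.Ico (i : ℕ) (j : ℕ), (1 - α * c m)) := by
  intro i j hij
  subst hJinv
  rw [mul_diagonal_mul_transpose_apply, ← Finset.sum_subset (Finset.subset_univ (Finset.Iic i))]
  · refine Finset.sum_congr rfl fun k hk => ?_
    have hki : (k : ℕ) ≤ i := Fin.le_def.mp (Finset.mem_Iic.mp hk)
    have hkj : (k : ℕ) ≤ j := hki.trans hij
    rw [of_apply, of_apply, if_pos hki, if_pos hkj,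
      ← Finset.prod_Ico_consecutive _ hki (show (i : ℕ) ≤ j from hij)]
    ring
  · intro k _ hk
    have hik : ¬ (k : ℕ) ≤ i := by simpa using hk
    rw [of_apply, if_neg hik, zero_mul, zero_mul]

/-- Entries of `J⁻¹ Γ J⁻ᵀ` for the bidiagonal `J` (with `J⁻¹` given explicitly)
and diagonal nonnegative `Γ`. -/
theorem stmt13 (K : ℕ) (α : ℝ) (c : ℕ → ℝ) (γ : Fin K → ℝ) (hγ : ∀ k, 0 ≤ γ k)
    (Jinv : Matrix (Fin K) (Fin K) ℝ)
    (hJinv : Jinv = Matrix.of fun i j : Fin K =>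
      if (j : ℕ) ≤ (i : ℕ) then -(∏ ℓ ∈ Finset.Ico (j : ℕ) (i : ℕ), (1 - α * c ℓ)) else 0) :
    ∀ i j : Fin K, i ≤ j →
      (Jinv * Matrix.diagonal γ * Jinvᵀ) i j =
        ∑ k ∈ Finset.Iic i, γ k *
          (∏ m ∈ Finset.Ico (k : ℕ) (i : ℕ), (1 - α * c m)) ^ 2 *
          (∏ m ∈ Finset.Ico (i : ℕ) (j : ℕ), (1 - α * c m)) :=
  stmt13_general K α c γ Jinv hJinv
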